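/- Let S ∈ {FT, T̄} and A, B ∈ M_n(S). Then A ≤_J B if and only if there exists a tropical convex set Y ⊆ S^n such that R_S(A) ⊆ Y and there is a surjective linear morphism from R_S(B) onto Y. -/

import Mathlib

/-! If `A = P ⊗ B ⊗ Q`, then `R(A) ⊆ R(B ⊗ Q)` and `x ↦ x ⊗ Q` maps `R(B)` linearly onto
`R(B ⊗ Q)`. Conversely, lift each row `A i` through the surjection to a row `C i` of
`C = P ⊗ B`; the surjection sends `λ ⊗ C` to `λ ⊗ A` and is monotone, so `C i ≤ λ ⊗ C`
forces `A i ≤ λ ⊗ A`. That makes `A = C ⊗ (C \ A)`, where `(C \ A) k j = min_m (A m j - C m k)`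
is the residual, the largest `Q` with `C ⊗ Q ≤ A`: if `(C ⊗ (C \ A)) i j < c < A i j`, then
`λ m = c - A m j` satisfies `C i ≤ λ ⊗ C` but `(λ ⊗ A) j ≤ c`. The step `C i ≤ λ ⊗ C` uses
`c - (y - x) ≤ (c - y) + x`, which in `EReal` holds only for finite `c`; there `c` is taken real. -/

section TropDefs

variable {S : Type*} [SemilatticeSup S] [Add S] {n : ℕ} [NeZero n]

/-- Tropical (max-plus) matrix multiplication. -/
def tropMul (X Y : Matrix (Fin n) (Fin n) S) : Matrix (Fin n) (Fin n) S :=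
  fun i j => Finset.univ.sup' Finset.univ_nonempty fun k => X i k + Y k j

/-- Green's `J`-order: `A ≤_J B` iff `A ∈ M¹ B M¹`. -/
def JleGen {M : Type*} (mul : M → M → M) (A B : M) : Prop :=
  A = B ∨ (∃ P, A = mul P B) ∨ (∃ Q, A = mul B Q) ∨ ∃ P Q, A = mul (mul P B) Q

/-- A tropical convex set: closed under componentwise max and tropical scaling. -/
def TropConvex (Y : Set (Fin n → S)) : Prop :=
  (∀ x ∈ Y, ∀ y ∈ Y, x ⊔ y ∈ Y) ∧ ∀ c : S, ∀ x ∈ Y, (fun j => c + x j) ∈ Y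

/-- The (tropical) row space of `A`. -/
def tropRowSpan (A : Matrix (Fin n) (Fin n) S) : Set (Fin n → S) :=
  {v | ∃ lam : Fin n → S,
    v = fun j => Finset.univ.sup' Finset.univ_nonempty fun i => lam i + A i j}

/-- There is a surjective linear morphism from `X` onto `Y`. -/
def SurjLin (X Y : Set (Fin n → S)) : Prop :=
  ∃ f : (Fin n → S) → (Fin n → S),
    (∀ x ∈ X, ∀ y ∈ X, f (x ⊔ y) = f x ⊔ f y) ∧
    (∀ c : S, ∀ x ∈ X, (f fun j => c + x j) = fun j => c + f x j) ∧
    (∀ x ∈ X, f x ∈ Y) ∧ ∀ y ∈ Y, ∃ x ∈ X, f x = y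

/-- The statement, for a tropical semiring `S`:  `A ≤_J B` iff there is a
tropical convex set `Y ⊆ S^n` with `R_S(A) ⊆ Y` and a linear surjection of
`R_S(B)` onto `Y`. -/
def JorderChar (S : Type*) [SemilatticeSup S] [Add S] (n : ℕ) [NeZero n] : Prop :=
  ∀ A B : Matrix (Fin n) (Fin n) S,
    JleGen tropMul A B ↔
      ∃ Y : Set (Fin n → S), TropConvex Y ∧ tropRowSpan A ⊆ Y ∧
        SurjLin (tropRowSpan B) Y

end TropDefs

open Finset

variable {S : Type*} {n : ℕ}

theorem surjLin_refl [SemilatticeSup S] [Add S] (X : Set (Fin n → S)) : SurjLin X X :=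
  ⟨id, fun _ _ _ _ => rfl, fun _ _ _ => rfl, fun _ hx => hx, fun y hy => ⟨y, hy, rfl⟩⟩

variable [NeZero n]

section Sup

variable [SemilatticeSup S] [Add S]

def tropVecMul (lam : Fin n → S) (M : Matrix (Fin n) (Fin n) S) : Fin n → S :=
  fun j => univ.sup' univ_nonempty fun m => lam m + M m j

theorem tropVecMul_eq_sup' (lam : Fin n → S) (M : Matrix (Fin n) (Fin n) S) :
    tropVecMul lam M = univ.sup' univ_nonempty fun m j => lam m + M m j :=
  funext fun j => by rw [Finset.sup'_apply]; rfl

theorem map_tropVecMul {X : Set (Fin n → S)} (hX : TropConvex X) {f : (Fin n → S) → Fin n → S}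
    (hsup : ∀ x ∈ X, ∀ y ∈ X, f (x ⊔ y) = f x ⊔ f y)
    (hadd : ∀ c : S, ∀ x ∈ X, (f fun j => c + x j) = fun j => c + f x j)
    {C A : Matrix (Fin n) (Fin n) S} (hC : ∀ m, C m ∈ X) (hCA : ∀ m, f (C m) = A m)
    (lam : Fin n → S) : tropVecMul lam C ∈ X ∧ f (tropVecMul lam C) = tropVecMul lam A := by
  have hscale : ∀ m, (fun j => lam m + C m j) ∈ X := fun m => hX.2 _ _ (hC m)
  have key : ∀ (s : Finset (Fin n)) (hs : s.Nonempty),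
      s.sup' hs (fun m j => lam m + C m j) ∈ X ∧
      f (s.sup' hs fun m j => lam m + C m j) = s.sup' hs fun m j => lam m + A m j := by
    intro s hs
    induction hs using Nonempty.cons_induction with
    | singleton m => exact ⟨hscale m, by rw [sup'_singleton, hadd _ _ (hC m), hCA]; rfl⟩
    | cons m s _ hs ih =>
      simp only [sup'_cons hs]
      exact ⟨hX.1 _ (hscale m) _ ih.1, by rw [hsup _ (hscale m) _ ih.1, hadd _ _ (hC m), hCA, ih.2]⟩
  rw [tropVecMul_eq_sup', tropVecMul_eq_sup']
  exact key univ univ_nonempty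

end Sup

section LinearOrder

variable [LinearOrder S] [AddCommMonoid S] [AddLeftMono S]

theorem add_finset_sup' {ι : Type*} {s : Finset ι} (hs : s.Nonempty) (c : S) (g : ι → S) :
    c + s.sup' hs g = s.sup' hs (c + g ·) :=
  apply_sup'_eq_sup'_comp hs (c + ·) fun _ _ => (monotone_id.const_add c).map_sup _ _

theorem finset_sup'_add {ι : Type*} {s : Finset ι} (hs : s.Nonempty) (g : ι → S) (c : S) :
    s.sup' hs g + c = s.sup' hs (g · + c) :=
  apply_sup'_eq_sup'_comp hs (· + c) fun _ _ => (monotone_id.add_const c).map_sup _ _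

theorem tropVecMul_sup (lam mu : Fin n → S) (M : Matrix (Fin n) (Fin n) S) :
    tropVecMul (lam ⊔ mu) M = tropVecMul lam M ⊔ tropVecMul mu M := by
  funext j
  refine eq_of_forall_ge_iff fun c => ?_
  simp only [tropVecMul, Pi.sup_apply, sup_le_iff, sup'_le_iff, ← max_add_add_right, forall_and]

theorem tropVecMul_add_left (c : S) (lam : Fin n → S) (M : Matrix (Fin n) (Fin n) S) :
    tropVecMul (fun m => c + lam m) M = fun j => c + tropVecMul lam M j := by
  funext j
  simp only [tropVecMul, add_finset_sup', add_assoc]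

theorem tropVecMul_tropMul (lam : Fin n → S) (B Q : Matrix (Fin n) (Fin n) S) :
    tropVecMul lam (tropMul B Q) = tropVecMul (tropVecMul lam B) Q := by
  funext j
  simp only [tropVecMul, tropMul, add_finset_sup', finset_sup'_add, add_assoc]
  exact Finset.sup'_comm _ _ _

theorem tropMul_assoc (P B Q : Matrix (Fin n) (Fin n) S) :
    tropMul (tropMul P B) Q = tropMul P (tropMul B Q) :=
  funext fun i => (tropVecMul_tropMul (P i) B Q).symm

theorem tropConvex_tropRowSpan (M : Matrix (Fin n) (Fin n) S) : TropConvex (tropRowSpan M) :=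
  ⟨fun _ ⟨lam, hx⟩ _ ⟨mu, hy⟩ =>
      ⟨lam ⊔ mu, by subst hx hy; exact (tropVecMul_sup lam mu M).symm⟩,
    fun c _ ⟨lam, hx⟩ =>
      ⟨fun m => c + lam m, by subst hx; exact (tropVecMul_add_left c lam M).symm⟩⟩

theorem tropRowSpan_tropMul_subset (P B : Matrix (Fin n) (Fin n) S) :
    tropRowSpan (tropMul P B) ⊆ tropRowSpan B := fun _ ⟨lam, hv⟩ =>
  ⟨tropVecMul lam P, hv.trans (tropVecMul_tropMul lam P B)⟩

theorem surjLin_tropRowSpan_tropMul (B Q : Matrix (Fin n) (Fin n) S) :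
    SurjLin (tropRowSpan B) (tropRowSpan (tropMul B Q)) := by
  refine ⟨(tropVecMul · Q), fun x _ y _ => tropVecMul_sup x y Q,
    fun c x _ => tropVecMul_add_left c x Q, ?_, ?_⟩
  · rintro _ ⟨lam, rfl⟩
    exact ⟨lam, (tropVecMul_tropMul lam B Q).symm⟩
  · rintro _ ⟨lam, rfl⟩
    exact ⟨tropVecMul lam B, ⟨lam, rfl⟩, (tropVecMul_tropMul lam B Q).symm⟩

theorem exists_surjLin_of_jleGen {A B : Matrix (Fin n) (Fin n) S} (h : JleGen tropMul A B) :
    ∃ Y : Set (Fin n → S), TropConvex Y ∧ tropRowSpan A ⊆ Y ∧ SurjLin (tropRowSpan B) Y := by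
  rcases h with rfl | ⟨P, rfl⟩ | ⟨Q, rfl⟩ | ⟨P, Q, rfl⟩
  · exact ⟨_, tropConvex_tropRowSpan A, subset_rfl, surjLin_refl _⟩
  · exact ⟨_, tropConvex_tropRowSpan B, tropRowSpan_tropMul_subset P B, surjLin_refl _⟩
  · exact ⟨_, tropConvex_tropRowSpan _, subset_rfl, surjLin_tropRowSpan_tropMul B Q⟩
  · refine ⟨_, tropConvex_tropRowSpan _, ?_, surjLin_tropRowSpan_tropMul B Q⟩
    rw [tropMul_assoc]
    exact tropRowSpan_tropMul_subset P _

end LinearOrder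

section Residuated

variable [LinearOrder S] [AddCommMonoid S]
  (sub : S → S → S) (gc : ∀ y, GaloisConnection (· + y) (sub · y))

def tropLeftDiv (C A : Matrix (Fin n) (Fin n) S) : Matrix (Fin n) (Fin n) S :=
  fun k j => univ.inf' univ_nonempty fun m => sub (A m j) (C m k)

include gc

theorem row_mem_tropRowSpan (A : Matrix (Fin n) (Fin n) S) (i : Fin n) : A i ∈ tropRowSpan A := by
  set lam : Fin n → S := fun m => univ.inf' univ_nonempty fun p => sub (A i p) (A m p)
  refine ⟨lam, funext fun j => le_antisymm ?_ ?_⟩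
  · have hlam : 0 ≤ lam i := le_inf' _ _ fun p _ => (gc _).le_u (zero_add _).le
    calc A i j = 0 + A i j := (zero_add _).symm
      _ ≤ lam i + A i j := (gc _).monotone_l hlam
      _ ≤ tropVecMul lam A j := le_sup' (fun m => lam m + A m j) (mem_univ i)
  · exact sup'_le _ _ fun m _ => (gc _).l_le (inf'_le _ (mem_univ j))

theorem tropMul_tropLeftDiv_le (C A : Matrix (Fin n) (Fin n) S) (i j : Fin n) :
    tropMul C (tropLeftDiv sub C A) i j ≤ A i j :=
  sup'_le _ _ fun _ _ => by rw [add_comm]; exact (gc _).l_le (inf'_le _ (mem_univ i))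

variable (hmid : ∀ a b : S, b < a → ∃ c, b ≤ c ∧ c < a ∧ ∀ y x, sub c (sub y x) ≤ sub c y + x)
include hmid

theorem eq_tropMul_tropLeftDiv {C A : Matrix (Fin n) (Fin n) S}
    (hCA : ∀ i (lam : Fin n → S), C i ≤ tropVecMul lam C → A i ≤ tropVecMul lam A) :
    A = tropMul C (tropLeftDiv sub C A) := by
  funext i j
  refine le_antisymm ?_ (tropMul_tropLeftDiv_le sub gc C A i j)
  by_contra! hlt
  obtain ⟨c, hbc, hca, hc⟩ := hmid _ _ hlt
  set lam : Fin n → S := fun m => sub c (A m j)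
  have hlamA : tropVecMul lam A j ≤ c := sup'_le _ _ fun m _ => (gc _).l_u_le _
  have hlamC : C i ≤ tropVecMul lam C := fun k => by
    obtain ⟨m, -, hm⟩ := exists_mem_eq_inf' univ_nonempty fun m => sub (A m j) (C m k)
    have hk : C i k + tropLeftDiv sub C A k j ≤ c :=
      (le_sup' (fun k => C i k + tropLeftDiv sub C A k j) (mem_univ k)).trans hbc
    calc C i k ≤ sub c (tropLeftDiv sub C A k j) := (gc _).le_u hk
      _ = sub c (sub (A m j) (C m k)) := congrArg (sub c) hm
      _ ≤ lam m + C m k := hc _ _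
      _ ≤ tropVecMul lam C k := le_sup' (fun m => lam m + C m k) (mem_univ m)
  exact hca.not_ge ((hCA i lam hlamC j).trans hlamA)

theorem jleGen_of_surjLin [AddLeftMono S] {A B : Matrix (Fin n) (Fin n) S} {Y : Set (Fin n → S)}
    (hAY : tropRowSpan A ⊆ Y) (hBY : SurjLin (tropRowSpan B) Y) : JleGen tropMul A B := by
  obtain ⟨f, hsup, hadd, -, hsurj⟩ := hBY
  have hpre : ∀ i, ∃ p, f (tropVecMul p B) = A i := fun i => by
    obtain ⟨_, ⟨p, rfl⟩, hp⟩ := hsurj _ (hAY (row_mem_tropRowSpan sub gc A i))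
    exact ⟨p, hp⟩
  choose P hP using hpre
  have hC : ∀ m, tropMul P B m ∈ tropRowSpan B := fun m => ⟨P m, rfl⟩
  have hCA : ∀ m, f (tropMul P B m) = A m := hP
  have hlin := map_tropVecMul (tropConvex_tropRowSpan B) hsup hadd hC hCA
  have hmono : ∀ i lam,
      tropMul P B i ≤ tropVecMul lam (tropMul P B) → A i ≤ tropVecMul lam A := by
    intro i lam hle
    have h := hsup _ (hC i) _ (hlin lam).1
    rw [sup_eq_right.2 hle, (hlin lam).2, hCA] at h
    exact sup_eq_right.1 h.symm
  exact .inr <| .inr <| .inr ⟨P, _, eq_tropMul_tropLeftDiv sub gc hmid hmono⟩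

theorem jorderChar_of_residuated [AddLeftMono S] : JorderChar S n := fun _ _ =>
  ⟨exists_surjLin_of_jleGen, fun ⟨_, _, hAY, hBY⟩ => jleGen_of_surjLin sub gc hmid hAY hBY⟩

end Residuated

theorem jorderChar_real : JorderChar ℝ n :=
  jorderChar_of_residuated (· - ·) (fun _ _ _ => le_sub_iff_add_le.symm) fun _ b h =>
    ⟨b, le_rfl, h, fun _ _ => le_of_eq (by ring)⟩

namespace EReal

/-- `EReal`'s own subtraction is not residuated (`⊤ - ⊤ = ⊥`), hence this variant. -/
noncomputable def resSub (x y : EReal) : EReal :=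
  if y = ⊥ ∨ x = ⊤ then ⊤ else x - y

theorem gc_add_resSub (y : EReal) : GaloisConnection (· + y) (resSub · y) := by
  intro z x
  dsimp only [resSub]
  split_ifs with h
  · rcases h with rfl | rfl <;> simp
  · rw [not_or] at h
    exact (EReal.le_sub_iff_add_le (Or.inl h.1) (Or.inr h.2)).symm

theorem resSub_resSub_le (c : ℝ) (y x : EReal) : resSub c (resSub y x) ≤ resSub c y + x := by
  induction y <;> induction x <;> simp [resSub, ← EReal.coe_sub, ← EReal.coe_add]

end EReal

theorem jorderChar_ereal : JorderChar EReal n :=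
  jorderChar_of_residuated EReal.resSub EReal.gc_add_resSub fun _ _ h =>
    let ⟨c, hbc, hca⟩ := EReal.exists_between_coe_real h
    ⟨c, hbc.le, hca, EReal.resSub_resSub_le c⟩

/-- Characterisation of the `J`-order in `M_n(S)` for `S ∈ {FT, T̄}`
(formalised as `ℝ` and `EReal` with tropical operations). -/
theorem stmt11 (n : ℕ) [NeZero n] : JorderChar ℝ n ∧ JorderChar EReal n :=
  ⟨jorderChar_real, jorderChar_ereal⟩
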